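/- Let V, W be real symmetric n×n matrices with V positive definite. Then the matrix G = [[V + WV⁻¹W, WV⁻¹], [V⁻¹W, V⁻¹]] is symmetric, positive definite, and symplectic. -/

import Mathlib

/-!
With `L = [[1, 0], [W, 1]]`, the matrix `G` factors as `Lᵀ * diag(V, V⁻¹) * L`, so it is positive
definite (hence symmetric) as a congruence of a positive definite block-diagonal matrix by an
invertible one. The identity `G * J * G = J` is a direct block computation in which every term
containing `W` cancels.
-/

open Matrix

namespace Matrix

variable {m n R : Type*} [Fintype m] [Fintype n]

theorem PosDef.fromBlocks_zero_zero [Ring R] [PartialOrder R] [StarRing R]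
    [IsOrderedCancelAddMonoid R] {A : Matrix m m R} {D : Matrix n n R}
    (hA : A.PosDef) (hD : D.PosDef) : (fromBlocks A 0 0 D).PosDef := by
  refine .of_dotProduct_mulVec_pos ?_ fun x hx ↦ ?_
  · simp [IsHermitian, fromBlocks_conjTranspose, hA.isHermitian.eq, hD.isHermitian.eq]
  obtain ⟨u, v, rfl⟩ : ∃ u v, x = Sum.elim u v := ⟨_, _, (Sum.elim_comp_inl_inr x).symm⟩
  simp only [fromBlocks_mulVec, Function.star_sumElim, sumElim_dotProduct_sumElim, zero_mulVec,
    add_zero, zero_add, Sum.elim_comp_inl, Sum.elim_comp_inr]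
  by_cases hu : u = 0
  · have hv : v ≠ 0 := by rintro rfl; exact hx (by rw [hu, Sum.elim_zero_zero])
    simpa [hu] using hD.dotProduct_mulVec_pos hv
  · exact add_pos_of_pos_of_nonneg (hA.dotProduct_mulVec_pos hu)
      (hD.posSemidef.dotProduct_mulVec_nonneg v)

theorem posDef_fromBlocks_add_conjTranspose_mul_inv_mul {K : Type*} [Field K] [PartialOrder K]
    [StarRing K] [IsOrderedCancelAddMonoid K] [DecidableEq n] {V : Matrix n n K}
    (hV : V.PosDef) (W : Matrix n n K) :
    (fromBlocks (V + Wᴴ * V⁻¹ * W) (Wᴴ * V⁻¹) (V⁻¹ * W) V⁻¹).PosDef := by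
  have hL : IsUnit (fromBlocks 1 0 W 1 : Matrix (n ⊕ n) (n ⊕ n) K) := by
    simp [isUnit_iff_isUnit_det]
  convert (hV.fromBlocks_zero_zero hV.inv).conjTranspose_mul_mul_same
    (mulVec_injective_of_isUnit hL) using 1
  simp [fromBlocks_conjTranspose, fromBlocks_multiply, Matrix.mul_assoc]

theorem fromBlocks_mul_J_mul_fromBlocks [CommRing R] [DecidableEq n] {V : Matrix n n R}
    (hV : IsUnit V.det) (W : Matrix n n R) :
    fromBlocks (V + W * V⁻¹ * W) (W * V⁻¹) (V⁻¹ * W) V⁻¹ * fromBlocks 0 1 (-1) 0 *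
        fromBlocks (V + W * V⁻¹ * W) (W * V⁻¹) (V⁻¹ * W) V⁻¹ =
      fromBlocks 0 1 (-1) 0 := by
  simp only [fromBlocks_multiply]
  congr 1 <;> simp [Matrix.mul_add, Matrix.add_mul, Matrix.mul_assoc,
    mul_nonsing_inv_cancel_left _ _ hV, mul_nonsing_inv _ hV, nonsing_inv_mul _ hV]

end Matrix

theorem G_symmetric_posDef_symplectic_general (n : ℕ) (V W : Matrix (Fin n) (Fin n) ℝ)
    (hV : V.PosDef) (hWs : Wᵀ = W) :
    (fromBlocks (V + W * V⁻¹ * W) (W * V⁻¹) (V⁻¹ * W) V⁻¹)ᵀ =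
        fromBlocks (V + W * V⁻¹ * W) (W * V⁻¹) (V⁻¹ * W) V⁻¹ ∧
      (fromBlocks (V + W * V⁻¹ * W) (W * V⁻¹) (V⁻¹ * W) V⁻¹).PosDef ∧
      (fromBlocks (V + W * V⁻¹ * W) (W * V⁻¹) (V⁻¹ * W) V⁻¹)ᵀ *
          fromBlocks (0 : Matrix (Fin n) (Fin n) ℝ) 1 (-1) 0 *
          fromBlocks (V + W * V⁻¹ * W) (W * V⁻¹) (V⁻¹ * W) V⁻¹ =
        fromBlocks (0 : Matrix (Fin n) (Fin n) ℝ) 1 (-1) 0 := by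
  have hG := posDef_fromBlocks_add_conjTranspose_mul_inv_mul hV W
  rw [conjTranspose_eq_transpose_of_trivial, hWs] at hG
  have hG_symm := hG.isHermitian
  rw [IsHermitian, conjTranspose_eq_transpose_of_trivial] at hG_symm
  refine ⟨hG_symm, hG, ?_⟩
  rw [hG_symm]
  exact fromBlocks_mul_J_mul_fromBlocks ((isUnit_iff_isUnit_det V).mp hV.isUnit) W

/-- for `V, W` real symmetric with `V > 0`, the matrix
`G = [[V + WV⁻¹W, WV⁻¹], [V⁻¹W, V⁻¹]]` is symmetric, positive definite and
symplectic. -/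
theorem G_symmetric_posDef_symplectic (n : ℕ) (V W : Matrix (Fin n) (Fin n) ℝ)
    (hV : V.PosDef) (hVs : Vᵀ = V) (hWs : Wᵀ = W) :
    (fromBlocks (V + W * V⁻¹ * W) (W * V⁻¹) (V⁻¹ * W) V⁻¹)ᵀ =
        fromBlocks (V + W * V⁻¹ * W) (W * V⁻¹) (V⁻¹ * W) V⁻¹ ∧
      (fromBlocks (V + W * V⁻¹ * W) (W * V⁻¹) (V⁻¹ * W) V⁻¹).PosDef ∧
      (fromBlocks (V + W * V⁻¹ * W) (W * V⁻¹) (V⁻¹ * W) V⁻¹)ᵀ *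
          fromBlocks (0 : Matrix (Fin n) (Fin n) ℝ) 1 (-1) 0 *
          fromBlocks (V + W * V⁻¹ * W) (W * V⁻¹) (V⁻¹ * W) V⁻¹ =
        fromBlocks (0 : Matrix (Fin n) (Fin n) ℝ) 1 (-1) 0 :=
  G_symmetric_posDef_symplectic_general n V W hV hWs
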